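/- arXiv:2408.12918 — 3 statements merged into one kernel-verified Lean document; each statement's English description precedes it below -/
import Mathlib

section
/- For any two density matrices ρ₁, ρ₂ on a finite-dimensional complex Hilbert space (positive semidefinite, trace one), the superfidelity satisfies g(ρ₁,ρ₂) := Tr(ρ₁ρ₂) + √((1 − Tr(ρ₁²))(1 − Tr(ρ₂²))) ≤ 1. -/
open Matrix
open scoped ComplexOrder

private lemma trace_mul_eq_sum {n : ℕ} (A B : Matrix (Fin n) (Fin n) ℂ) :
    (A * B).trace = ∑ i, ∑ j, A i j * B j i := by
  simp [Matrix.trace, Matrix.mul_apply, Matrix.diag]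

private lemma trace_sq_eq_sum_sq {n : ℕ} {ρ : Matrix (Fin n) (Fin n) ℂ}
    (h : ρ.IsHermitian) :
    (ρ * ρ).trace.re = ∑ i, ∑ j, Complex.normSq (ρ i j) := by
  have : (ρ * ρ).trace = ∑ i, ∑ j, ((Complex.normSq (ρ i j) : ℂ)) := by
    rw [trace_mul_eq_sum]
    refine Finset.sum_congr rfl fun i _ => Finset.sum_congr rfl fun j _ => ?_
    calc ρ i j * ρ j i = ρ i j * star (ρ i j) := congrArg (fun z => ρ i j * z) (h.apply j i).symm
      _ = ((Complex.normSq (ρ i j) : ℂ)) := Complex.mul_conj (ρ i j)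
  rw [this]
  simp

/-- trace of square of a psd trace-one matrix is at most 1. -/
private lemma trace_sq_le_one {n : ℕ} {ρ : Matrix (Fin n) (Fin n) ℂ}
    (h : ρ.PosSemidef) (t : ρ.trace = 1) : (ρ * ρ).trace.re ≤ 1 := by
  classical
  have hH := h.1
  have spec := hH.spectral_theorem
  set U : Matrix (Fin n) (Fin n) ℂ := (hH.eigenvectorUnitary : Matrix (Fin n) (Fin n) ℂ) with hU
  set D : Matrix (Fin n) (Fin n) ℂ := Matrix.diagonal (RCLike.ofReal ∘ hH.eigenvalues) with hD
  have hUU : star U * U = 1 := (Matrix.mem_unitaryGroup_iff').mp hH.eigenvectorUnitary.2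
  have htrD : ρ.trace = D.trace := by
    rw [spec, Unitary.conjStarAlgAut_apply, ← hU, trace_mul_cycle, hUU, one_mul]
  have htrD2 : (ρ * ρ).trace = (D * D).trace := by
    rw [spec, Unitary.conjStarAlgAut_apply, ← hU]
    simp only [Matrix.mul_assoc]
    rw [show star U * (U * (D * star U)) = D * star U by
      rw [← Matrix.mul_assoc, hUU, Matrix.one_mul]]
    rw [Matrix.trace_mul_comm]
    simp only [Matrix.mul_assoc]
    rw [hUU]
    simp [Matrix.mul_assoc]
  have hsum1 : ∑ i, hH.eigenvalues i = 1 := by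
    have h1 : D.trace = (1 : ℂ) := htrD ▸ t
    rw [hD, Matrix.trace_diagonal] at h1
    have h2 : ((∑ i, hH.eigenvalues i : ℝ) : ℂ) = 1 := by push_cast; simpa using h1
    exact_mod_cast h2
  have hDD : (D * D).trace = ((∑ i, (hH.eigenvalues i) ^ 2 : ℝ) : ℂ) := by
    rw [hD, Matrix.diagonal_mul_diagonal, Matrix.trace_diagonal]
    push_cast
    simp [sq]
  have hnn : ∀ i, 0 ≤ hH.eigenvalues i := h.eigenvalues_nonneg
  have key : ∑ i, (hH.eigenvalues i) ^ 2 ≤ 1 := by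
    calc ∑ i, (hH.eigenvalues i) ^ 2 ≤ (∑ i, hH.eigenvalues i) ^ 2 :=
          Finset.sum_sq_le_sq_sum_of_nonneg (fun i _ => hnn i)
      _ = 1 := by rw [hsum1]; norm_num
  rw [htrD2, hDD, Complex.ofReal_re]
  exact key

/-- Superfidelity of two density matrices is at most 1. -/
theorem superfidelity_le_one {n : ℕ} (ρ₁ ρ₂ : Matrix (Fin n) (Fin n) ℂ)
    (h₁ : ρ₁.PosSemidef) (h₂ : ρ₂.PosSemidef)
    (t₁ : ρ₁.trace = 1) (t₂ : ρ₂.trace = 1) :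
    (ρ₁ * ρ₂).trace.re +
      Real.sqrt ((1 - (ρ₁ * ρ₁).trace.re) * (1 - (ρ₂ * ρ₂).trace.re)) ≤ 1 := by
  classical
  set a : ℝ := (ρ₁ * ρ₁).trace.re with ha
  set b : ℝ := (ρ₂ * ρ₂).trace.re with hb
  set v₁ : EuclideanSpace ℂ (Fin n × Fin n) := WithLp.toLp 2 (fun p : Fin n × Fin n => ρ₁ p.1 p.2) with hv₁
  set v₂ : EuclideanSpace ℂ (Fin n × Fin n) := WithLp.toLp 2 (fun p : Fin n × Fin n => ρ₂ p.1 p.2) with hv₂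
  have hna : a = ‖v₁‖ ^ 2 := by
    rw [ha, trace_sq_eq_sum_sq h₁.1, EuclideanSpace.norm_eq,
      Real.sq_sqrt (by positivity), ← Finset.univ_product_univ, ← Finset.sum_product']
    refine Finset.sum_congr rfl fun p _ => ?_
    simp only [hv₁, PiLp.toLp_apply, Complex.sq_norm]
  have hnb : b = ‖v₂‖ ^ 2 := by
    rw [hb, trace_sq_eq_sum_sq h₂.1, EuclideanSpace.norm_eq,
      Real.sq_sqrt (by positivity), ← Finset.univ_product_univ, ← Finset.sum_product']
    refine Finset.sum_congr rfl fun p _ => ?_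
    simp only [hv₂, PiLp.toLp_apply, Complex.sq_norm]
  have hinner : (ρ₁ * ρ₂).trace = inner ℂ v₂ v₁ := by
    rw [trace_mul_eq_sum]
    rw [show (inner ℂ v₂ v₁ : ℂ) = ∑ p : Fin n × Fin n, (starRingEnd ℂ) (v₂ p) * v₁ p by
      simp [PiLp.inner_apply, RCLike.inner_apply, mul_comm]]
    rw [← Finset.univ_product_univ, ← Finset.sum_product']
    refine Finset.sum_congr rfl fun p _ => ?_
    simp only [hv₁, hv₂, PiLp.toLp_apply]
    rw [← h₂.1.apply p.2 p.1]
    exact mul_comm _ _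
  have hcs : (ρ₁ * ρ₂).trace.re ≤ ‖v₂‖ * ‖v₁‖ := by
    rw [hinner]
    calc (inner ℂ v₂ v₁ : ℂ).re ≤ ‖(inner ℂ v₂ v₁ : ℂ)‖ := Complex.re_le_norm _
      _ ≤ ‖v₂‖ * ‖v₁‖ := norm_inner_le_norm v₂ v₁
  have hab : ‖v₂‖ * ‖v₁‖ = Real.sqrt (a * b) := by
    rw [hna, hnb, Real.sqrt_mul (by positivity), Real.sqrt_sq (norm_nonneg _),
      Real.sqrt_sq (norm_nonneg _)]
    ring
  have ha0 : 0 ≤ a := by rw [hna]; positivity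
  have hb0 : 0 ≤ b := by rw [hnb]; positivity
  have ha1 : a ≤ 1 := trace_sq_le_one h₁ t₁
  have hb1 : b ≤ 1 := trace_sq_le_one h₂ t₂
  have key : Real.sqrt (a * b) + Real.sqrt ((1 - a) * (1 - b)) ≤ 1 := by
    have h1 : Real.sqrt (a * b) ≤ (a + b) / 2 := by
      rw [show (a + b) / 2 = Real.sqrt (((a + b) / 2) ^ 2) from
        (Real.sqrt_sq (by linarith)).symm]
      exact Real.sqrt_le_sqrt (by nlinarith [sq_nonneg (a - b)])
    have h2 : Real.sqrt ((1 - a) * (1 - b)) ≤ ((1 - a) + (1 - b)) / 2 := by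
      rw [show ((1 - a) + (1 - b)) / 2 = Real.sqrt ((((1 - a) + (1 - b)) / 2) ^ 2) from
        (Real.sqrt_sq (by linarith)).symm]
      exact Real.sqrt_le_sqrt (by nlinarith [sq_nonneg (a - b)])
    linarith
  calc (ρ₁ * ρ₂).trace.re + Real.sqrt ((1 - a) * (1 - b))
      ≤ Real.sqrt (a * b) + Real.sqrt ((1 - a) * (1 - b)) := by
        rw [← hab]; linarith [hcs]
    _ ≤ 1 := key
end

section
/- For 2×2 density matrices ρ₁ and ρ₂, the superfidelity equals the squared Uhlmann fidelity: Tr(ρ₁ρ₂) + 2√(det ρ₁ · det ρ₂) = (Tr √(√ρ₁ ρ₂ √ρ₁))². -/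
open Matrix
open scoped ComplexOrder

noncomputable def Matrix.PosSemidef.sqrt {n 𝕜 : Type*} [Fintype n] [DecidableEq n] [RCLike 𝕜]
    {A : Matrix n n 𝕜} (hA : A.PosSemidef) : Matrix n n 𝕜 :=
  hA.1.eigenvectorUnitary.1 * diagonal ((↑) ∘ (√·) ∘ hA.1.eigenvalues) *
  (star hA.1.eigenvectorUnitary : Matrix n n 𝕜)

lemma Matrix.PosSemidef.posSemidef_sqrt {n 𝕜 : Type*} [Fintype n] [DecidableEq n] [RCLike 𝕜]
    {A : Matrix n n 𝕜} (hA : A.PosSemidef) : hA.sqrt.PosSemidef := by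
  unfold Matrix.PosSemidef.sqrt
  have h := (posSemidef_diagonal_iff (d := ((↑) ∘ (√·) ∘ hA.1.eigenvalues : n → 𝕜))).mpr
    (fun i => by simp [Real.sqrt_nonneg])
  have := h.mul_mul_conjTranspose_same (hA.1.eigenvectorUnitary : Matrix n n 𝕜)
  simpa [Matrix.star_eq_conjTranspose] using this

lemma Matrix.PosSemidef.sqrt_mul_self {n 𝕜 : Type*} [Fintype n] [DecidableEq n] [RCLike 𝕜]
    {A : Matrix n n 𝕜} (hA : A.PosSemidef) : hA.sqrt * hA.sqrt = A := by
  unfold Matrix.PosSemidef.sqrt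
  set U := hA.1.eigenvectorUnitary
  have hU : (star U : Matrix n n 𝕜) * U = 1 := Unitary.coe_star_mul_self U
  have hD : diagonal ((↑) ∘ (√·) ∘ hA.1.eigenvalues : n → 𝕜) *
      diagonal ((↑) ∘ (√·) ∘ hA.1.eigenvalues : n → 𝕜) =
      diagonal (RCLike.ofReal ∘ hA.1.eigenvalues) := by
    rw [diagonal_mul_diagonal]
    congr 1; funext i
    simp only [Function.comp_apply]
    rw [← RCLike.ofReal_mul, Real.mul_self_sqrt (hA.eigenvalues_nonneg i)]
  calc _ = (U : Matrix n n 𝕜) * (diagonal ((↑) ∘ (√·) ∘ hA.1.eigenvalues : n → 𝕜) *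
      ((star U : Matrix n n 𝕜) * U) * diagonal ((↑) ∘ (√·) ∘ hA.1.eigenvalues : n → 𝕜))
        * (star U : Matrix n n 𝕜) := by simp only [Matrix.mul_assoc]
    _ = A := by
      rw [hU, Matrix.mul_one, hD]
      conv_rhs => rw [hA.1.spectral_theorem]
      rfl

lemma trace_sq_fin_two (S : Matrix (Fin 2) (Fin 2) ℂ) :
    S.trace ^ 2 = (S * S).trace + 2 * S.det := by
  simp [Matrix.trace_fin_two, Matrix.mul_apply, Matrix.det_fin_two, Fin.sum_univ_two]
  ring

lemma psd_det_real {n : Type*} [Fintype n] [DecidableEq n]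
    (A : Matrix n n ℂ) (h : A.PosSemidef) :
    A.det = ((∏ i, h.1.eigenvalues i : ℝ) : ℂ) := by
  rw [h.1.det_eq_prod_eigenvalues]; push_cast; rfl

lemma psd_det_im {n : Type*} [Fintype n] [DecidableEq n]
    (A : Matrix n n ℂ) (h : A.PosSemidef) : A.det.im = 0 := by
  rw [psd_det_real A h]; exact Complex.ofReal_im _

lemma psd_det_re_nonneg {n : Type*} [Fintype n] [DecidableEq n]
    (A : Matrix n n ℂ) (h : A.PosSemidef) : 0 ≤ A.det.re := by
  rw [psd_det_real A h]
  simp only [Complex.ofReal_re]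
  exact Finset.prod_nonneg fun i _ => h.eigenvalues_nonneg i

lemma psd_trace_im (A : Matrix (Fin 2) (Fin 2) ℂ) (h : A.PosSemidef) :
    A.trace.im = 0 := by
  have h0 := h.1.apply 0 0
  have h1 := h.1.apply 1 1
  simp only [RCLike.star_def, Complex.ext_iff, Complex.conj_re, Complex.conj_im] at h0 h1
  simp only [Matrix.trace_fin_two, Complex.add_im]
  linarith [h0.2, h1.2]

/-- For 2×2 density matrices, superfidelity equals the squared Uhlmann fidelity:
`Tr(ρ₁ρ₂) + 2√(det ρ₁ · det ρ₂) = (Tr √(√ρ₁ ρ₂ √ρ₁))²`. -/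
theorem superfidelity_eq_fidelity_sq_qubit
    (ρ₁ ρ₂ : Matrix (Fin 2) (Fin 2) ℂ)
    (h₁ : ρ₁.PosSemidef) (h₂ : ρ₂.PosSemidef)
    (t₁ : ρ₁.trace = 1) (t₂ : ρ₂.trace = 1)
    (hM : (h₁.sqrt * ρ₂ * h₁.sqrt).PosSemidef) :
    (ρ₁ * ρ₂).trace.re + 2 * Real.sqrt (ρ₁.det.re * ρ₂.det.re)
      = hM.sqrt.trace.re ^ 2 := by
  set S := hM.sqrt with hS
  have hSpsd : S.PosSemidef := hM.posSemidef_sqrt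
  have hSS : S * S = h₁.sqrt * ρ₂ * h₁.sqrt := hM.sqrt_mul_self
  -- trace of M equals trace of ρ₁ρ₂
  have htrM : (S * S).trace = (ρ₁ * ρ₂).trace := by
    rw [hSS, Matrix.trace_mul_cycle, h₁.sqrt_mul_self]
  -- det S squared equals det ρ₁ * det ρ₂
  have hdetS : S.det ^ 2 = ρ₁.det * ρ₂.det := by
    have : S.det * S.det = (h₁.sqrt * ρ₂ * h₁.sqrt).det := by
      rw [← Matrix.det_mul, hSS]
    rw [sq, this, Matrix.det_mul, Matrix.det_mul]
    have : h₁.sqrt.det * h₁.sqrt.det = ρ₁.det := by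
      rw [← Matrix.det_mul, h₁.sqrt_mul_self]
    rw [mul_comm _ h₁.sqrt.det, ← mul_assoc, this]
  -- real parts / nonnegativity
  have hSdet_im : S.det.im = 0 := psd_det_im S hSpsd
  have hSdet_re : 0 ≤ S.det.re := psd_det_re_nonneg S hSpsd
  have h1im : ρ₁.det.im = 0 := psd_det_im ρ₁ h₁
  have h2im : ρ₂.det.im = 0 := psd_det_im ρ₂ h₂
  -- (S.det.re)^2 = ρ₁.det.re * ρ₂.det.re
  have hdet_re : S.det.re ^ 2 = ρ₁.det.re * ρ₂.det.re := by
    have := congrArg Complex.re hdetS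
    simpa [pow_two, Complex.mul_re, hSdet_im, h1im, h2im] using this
  have hsqrt : Real.sqrt (ρ₁.det.re * ρ₂.det.re) = S.det.re := by
    rw [← hdet_re, Real.sqrt_sq hSdet_re]
  -- the trace identity
  have hid : S.trace ^ 2 = (ρ₁ * ρ₂).trace + 2 * S.det := by
    rw [trace_sq_fin_two, htrM]
  have hStr_im : S.trace.im = 0 := psd_trace_im S hSpsd
  have := congrArg Complex.re hid
  simp only [pow_two, Complex.mul_re, hStr_im, Complex.add_re, Complex.mul_re,
    hSdet_im] at this
  norm_num at this
  rw [hsqrt, pow_two]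
  linarith
end

section
/- Single-qubit QFI optimization in χ: fix r ∈ (0,1], p₁, p₂ > 0 with p₁ + p₂ = 1, and c > 0. The function F(χ) = (−2r²(1 − r²)χ + r⁴χ²)·c / (1 − r² − 2r²p₁p₂χ) on the interval χ ∈ [−2, 0] attains its maximum at χ = −2 (assuming the denominator is positive on this interval, which holds for r < 1 or χ < 0). -/
/-- The single-qubit QFI expression, as a function of `χ ∈ [−2,0]`, is maximized at
`χ = −2`. -/
theorem qfi_chi_max (r p₁ p₂ c : ℝ) (hr : 0 < r) (hr' : r ≤ 1)
    (hp₁ : 0 < p₁) (hp₂ : 0 < p₂) (hsum : p₁ + p₂ = 1) (hc : 0 < c) :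
    ∀ χ ∈ Set.Icc (-2 : ℝ) 0,
      (-2 * r ^ 2 * (1 - r ^ 2) * χ + r ^ 4 * χ ^ 2) * c
          / (1 - r ^ 2 - 2 * r ^ 2 * p₁ * p₂ * χ)
        ≤ (-2 * r ^ 2 * (1 - r ^ 2) * (-2) + r ^ 4 * (-2) ^ 2) * c
          / (1 - r ^ 2 - 2 * r ^ 2 * p₁ * p₂ * (-2)) := by
  intro χ hχ
  obtain ⟨h1, h2⟩ := hχ
  have hq : p₁ * p₂ ≤ 1/4 := by nlinarith [sq_nonneg (p₁ - p₂)]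
  have hr2 : 1 - r ^ 2 ≥ 0 := by nlinarith
  have hD2 : 0 < 1 - r ^ 2 - 2 * r ^ 2 * p₁ * p₂ * (-2) := by
    nlinarith [mul_pos (mul_pos (pow_pos hr 2) hp₁) hp₂]
  have hDχ : 0 ≤ 1 - r ^ 2 - 2 * r ^ 2 * p₁ * p₂ * χ := by
    nlinarith [mul_pos hp₁ hp₂]
  rcases eq_or_lt_of_le hDχ with h0 | hpos
  · rw [← h0, div_zero]
    apply div_nonneg _ hD2.le
    nlinarith [mul_pos hp₁ hp₂]
  · rw [div_le_div_iff₀ hpos hD2]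
    have hx2 : (0:ℝ) ≤ 2 + χ := by linarith
    have hx2' : (0:ℝ) ≤ 2 - χ := by linarith
    have hxn : (0:ℝ) ≤ -χ := by linarith
    have H1 : 0 ≤ c * r^2 * ((1 - r^2) * (r^2 * ((2 - χ) * (2 + χ)))) := by positivity
    have H2 : 0 ≤ c * r^2 * ((1 - r^2)^2 * (2 + χ)) := by positivity
    have H3 : 0 ≤ c * r^2 * (r^4 * ((p₁ * p₂) * ((-χ) * (2 + χ)))) := by positivity
    nlinarith [H1, H2, H3]
end
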